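/- arXiv:1508.03216 — 2 statements merged into one kernel-verified Lean document; each statement's English description precedes it below -/
import Mathlib

section
/- (Proposition 1, maximality, case m = N.) If z, z̄ ∈ ℂ^N and S, S̄ ∈ ℂ^{N×N} are Hermitian positive definite with z₂† S₂₂⁻¹ z₂ = z̄₂† S̄₂₂⁻¹ z̄₂, then there exists (G,f) ∈ 𝓛 such that z = G z̄ + f and S = G S̄ G†. -/
open Matrix ComplexOrder

/-- The set 𝓖 for the case `t + r = N`: block upper-triangular matrices
`G = [[G₁₁, G₁₂], [0, G₂₂]]` with `G₁₁` and `G₂₂` invertible. -/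
def memG (t r : ℕ) (G : Matrix (Fin t ⊕ Fin r) (Fin t ⊕ Fin r) ℂ) : Prop :=
  (∀ i j, G (Sum.inr i) (Sum.inl j) = 0) ∧
  IsUnit (G.submatrix Sum.inl Sum.inl) ∧
  IsUnit (G.submatrix Sum.inr Sum.inr)

/-- The set 𝓕 for the case `t + r = N`: vectors whose last `r` entries are zero. -/
def memF (t r : ℕ) (f : Fin t ⊕ Fin r → ℂ) : Prop :=
  ∀ i, f (Sum.inr i) = 0

/-- Second block (size `r`) of a partitioned vector. -/
def blk2 {t r : ℕ} (z : Fin t ⊕ Fin r → ℂ) : Fin r → ℂ :=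
  fun i => z (Sum.inr i)

/-- The `(2,2)` diagonal block `S₂₂` of a partitioned matrix. -/
def S22 {t r : ℕ} (S : Matrix (Fin t ⊕ Fin r) (Fin t ⊕ Fin r) ℂ) :
    Matrix (Fin r) (Fin r) ℂ :=
  S.submatrix Sum.inr Sum.inr

/-! A positive definite `S` factors as `S = T Tᴴ` with `T` block upper triangular (a block
Cholesky factorization through the Schur complement of `S₂₂`), and then `S₂₂ = T₂₂ T₂₂ᴴ`, so the
invariant `z₂ᴴ S₂₂⁻¹ z₂` is the squared norm of `T₂₂⁻¹ z₂`. Equal invariants therefore give a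
unitary `U` with `U T̄₂₂⁻¹ z̄₂ = T₂₂⁻¹ z₂`. Then `G = T diag(1, U) T̄⁻¹` is block upper triangular,
`G S̄ Gᴴ = T Tᴴ = S`, and the second block of `G z̄` is `T₂₂ U T̄₂₂⁻¹ z̄₂ = z₂`, so
`f = z - G z̄ ∈ 𝓕`. -/

section

variable {𝕜 : Type*} [RCLike 𝕜] {m n : Type*} [Fintype m] [Fintype n]

lemma Matrix.fromBlocks_zero₂₁_mul {α : Type*} [NonUnitalNonAssocSemiring α]
    (A A' : Matrix m m α) (B B' : Matrix m n α) (D D' : Matrix n n α) :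
    fromBlocks A B 0 D * fromBlocks A' B' 0 D' =
      fromBlocks (A * A') (A * B' + B * D') 0 (D * D') := by
  simp [fromBlocks_multiply]

variable [DecidableEq m] [DecidableEq n]

lemma Matrix.exists_mem_unitaryGroup_mulVec_single (x : n → 𝕜) (i : n) :
    ∃ U ∈ unitaryGroup n 𝕜, U *ᵥ Pi.single i (‖WithLp.toLp 2 x‖ : 𝕜) = x := by
  obtain rfl | hx := eq_or_ne x 0
  · exact ⟨1, one_mem _, by simp⟩
  have hx' : ‖WithLp.toLp 2 x‖ ≠ 0 := by simpa using hx
  set v : EuclideanSpace 𝕜 n := (‖WithLp.toLp 2 x‖⁻¹ : 𝕜) • WithLp.toLp 2 x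
  have hv : Orthonormal 𝕜 (({i} : Set n).domRestrict fun _ ↦ v) := by
    refine orthonormal_iff_ite.mpr fun a b ↦ ?_
    rw [if_pos (Subsingleton.elim a b)]
    simp [inner_self_eq_norm_sq_to_K, v, norm_smul_inv_norm (norm_ne_zero_iff.mp hx')]
  obtain ⟨b, hb⟩ := hv.exists_orthonormalBasis_extension_of_card_eq (by simp)
  refine ⟨(EuclideanSpace.basisFun n 𝕜).toBasis.toMatrix b,
    (EuclideanSpace.basisFun n 𝕜).toMatrix_orthonormalBasis_mem_unitary b, ?_⟩
  ext j
  simp [mulVec_single, Module.Basis.toMatrix_apply, hb i rfl, v, mul_right_comm _ (x j), hx']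

lemma Matrix.exists_mem_unitaryGroup_mulVec_eq {a b : n → 𝕜}
    (h : star a ⬝ᵥ a = star b ⬝ᵥ b) : ∃ U ∈ unitaryGroup n 𝕜, U *ᵥ b = a := by
  cases isEmpty_or_nonempty n
  · exact ⟨1, one_mem _, Subsingleton.elim _ _⟩
  obtain ⟨i⟩ := ‹Nonempty n›
  have hab : ‖WithLp.toLp 2 a‖ = ‖WithLp.toLp 2 b‖ := by
    rw [← sq_eq_sq₀ (norm_nonneg _) (norm_nonneg _), ← RCLike.ofReal_inj (K := 𝕜),
      RCLike.ofReal_pow, RCLike.ofReal_pow, ← inner_self_eq_norm_sq_to_K,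
      ← inner_self_eq_norm_sq_to_K, EuclideanSpace.inner_toLp_toLp,
      EuclideanSpace.inner_toLp_toLp, dotProduct_comm a, dotProduct_comm b, h]
  obtain ⟨A, hA, hAa⟩ := exists_mem_unitaryGroup_mulVec_single a i
  obtain ⟨B, hB, hBb⟩ := exists_mem_unitaryGroup_mulVec_single b i
  refine ⟨A * star B, mul_mem hA (Unitary.star_mem hB), ?_⟩
  rw [← hBb, mulVec_mulVec, mul_assoc, Unitary.star_mul_self_of_mem hB, mul_one, ← hab, hAa]

lemma Matrix.dotProduct_mulVec_inv_mul_conjTranspose (A : Matrix n n 𝕜) (u : n → 𝕜) :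
    star u ⬝ᵥ ((A * Aᴴ)⁻¹ *ᵥ u) = star (A⁻¹ *ᵥ u) ⬝ᵥ (A⁻¹ *ᵥ u) := by
  rw [star_mulVec, ← dotProduct_mulVec, mulVec_mulVec, Matrix.mul_inv_rev,
    conjTranspose_nonsing_inv]

open scoped MatrixOrder in
lemma Matrix.PosDef.exists_isUnit_eq_mul_conjTranspose {P : Matrix n n 𝕜} (hP : P.PosDef) :
    ∃ A : Matrix n n 𝕜, IsUnit A ∧ P = A * Aᴴ := by
  obtain ⟨A, hA⟩ := CStarAlgebra.nonneg_iff_eq_mul_star_self.mp hP.posSemidef.nonneg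
  refine ⟨A, ?_, hA⟩
  have hdet := (isUnit_iff_isUnit_det P).mp hP.isUnit
  rw [hA, det_mul] at hdet
  exact (isUnit_iff_isUnit_det A).mpr (isUnit_of_mul_isUnit_left hdet)

lemma Matrix.PosDef.schur_complement₂₂ {A : Matrix m m 𝕜} {B : Matrix m n 𝕜}
    {D : Matrix n n 𝕜} (h : (fromBlocks A B Bᴴ D).PosDef) (hD : D.PosDef) :
    (A - B * D⁻¹ * Bᴴ).PosDef := by
  have := hD.isUnit.invertible
  refine ((hD.fromBlocks₂₂ A B).mp h.posSemidef).posDef_iff_isUnit.mpr ?_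
  have hdet := (isUnit_iff_isUnit_det _).mp h.isUnit
  rw [det_fromBlocks₂₂] at hdet
  rw [isUnit_iff_isUnit_det, ← invOf_eq_nonsing_inv]
  exact isUnit_of_mul_isUnit_right hdet

lemma Matrix.PosDef.exists_fromBlocks_zero₂₁_mul_conjTranspose
    {S : Matrix (m ⊕ n) (m ⊕ n) 𝕜} (hS : S.PosDef) :
    ∃ (A : Matrix m m 𝕜) (B : Matrix m n 𝕜) (D : Matrix n n 𝕜), IsUnit A ∧ IsUnit D ∧
      S = fromBlocks A B 0 D * (fromBlocks A B 0 D)ᴴ := by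
  obtain ⟨-, hBC, -, -⟩ :=
    isHermitian_fromBlocks_iff.mp (S.fromBlocks_toBlocks ▸ hS.isHermitian)
  set B := S.toBlocks₁₂
  set D := S.toBlocks₂₂
  have hS' : S = fromBlocks S.toBlocks₁₁ B Bᴴ D := by rw [hBC, fromBlocks_toBlocks]
  have hD : D.PosDef := hS.submatrix Sum.inr_injective
  obtain ⟨E, hE, hDE⟩ := hD.exists_isUnit_eq_mul_conjTranspose
  obtain ⟨C, hC, hΔC⟩ := ((hS' ▸ hS).schur_complement₂₂ hD).exists_isUnit_eq_mul_conjTranspose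
  refine ⟨C, B * (Eᴴ)⁻¹, E, hC, hE, ?_⟩
  rw [fromBlocks_conjTranspose, fromBlocks_multiply, hS']
  congr 1
  · rw [← hΔC, conjTranspose_mul, conjTranspose_nonsing_inv, conjTranspose_conjTranspose, hDE,
      Matrix.mul_inv_rev]
    simp only [Matrix.mul_assoc, sub_add_cancel]
  · rw [Matrix.mul_assoc, nonsing_inv_mul _ ((isUnit_iff_isUnit_det Eᴴ).mp hE.star)]
    simp
  · rw [conjTranspose_mul, conjTranspose_nonsing_inv, conjTranspose_conjTranspose,
      ← Matrix.mul_assoc, mul_nonsing_inv _ ((isUnit_iff_isUnit_det E).mp hE)]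
    simp
  · simp [hDE]

lemma Matrix.exists_fromBlocks_zero₂₁_conjugate {A Ab : Matrix m m 𝕜} {B Bb : Matrix m n 𝕜}
    {D Db U : Matrix n n 𝕜} (hA : IsUnit A) (hAb : IsUnit Ab) (hDb : IsUnit Db)
    (hU : U ∈ unitaryGroup n 𝕜) :
    ∃ (A' : Matrix m m 𝕜) (X : Matrix m n 𝕜), IsUnit A' ∧
      fromBlocks A B 0 D * (fromBlocks A B 0 D)ᴴ =
        fromBlocks A' X 0 (D * U * Db⁻¹) * (fromBlocks Ab Bb 0 Db * (fromBlocks Ab Bb 0 Db)ᴴ) *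
          (fromBlocks A' X 0 (D * U * Db⁻¹))ᴴ := by
  set T := fromBlocks A B 0 D
  set Tb := fromBlocks Ab Bb 0 Db
  set K : Matrix (m ⊕ n) (m ⊕ n) 𝕜 := fromBlocks 1 0 0 U
  set G := T * K * Tb⁻¹
  obtain ⟨X, hG⟩ : ∃ X, G = fromBlocks (A * Ab⁻¹) X 0 (D * U * Db⁻¹) := by
    simp only [G, T, K, Tb, inv_fromBlocks_zero₂₁_of_isUnit_iff _ _ _ (iff_of_true hAb hDb),
      fromBlocks_zero₂₁_mul, Matrix.mul_one]
    exact ⟨_, rfl⟩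
  refine ⟨A * Ab⁻¹, X, hA.mul (isUnit_nonsing_inv_iff.mpr hAb), hG ▸ ?_⟩
  have hGT : G * Tb = T * K := by
    rw [Matrix.mul_assoc, nonsing_inv_mul _ ((isUnit_iff_isUnit_det Tb).mp
      (isUnit_fromBlocks_zero₂₁.mpr ⟨hAb, hDb⟩)), Matrix.mul_one]
  have hKK : K * Kᴴ = 1 := by
    have hUU : U * Uᴴ = 1 := mem_unitaryGroup_iff.mp hU
    simp [K, fromBlocks_conjTranspose, fromBlocks_multiply, hUU]
  calc T * Tᴴ = T * K * (T * K)ᴴ := by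
        rw [conjTranspose_mul, Matrix.mul_assoc, ← Matrix.mul_assoc K, hKK, Matrix.one_mul]
    _ = G * Tb * (G * Tb)ᴴ := by rw [hGT]
    _ = G * (Tb * Tbᴴ) * Gᴴ := by simp only [conjTranspose_mul, Matrix.mul_assoc]

end

lemma memG_fromBlocks {t r : ℕ} {A : Matrix (Fin t) (Fin t) ℂ} {B : Matrix (Fin t) (Fin r) ℂ}
    {D : Matrix (Fin r) (Fin r) ℂ} (hA : IsUnit A) (hD : IsUnit D) :
    memG t r (fromBlocks A B 0 D) :=
  ⟨fun _ _ ↦ rfl, hA, hD⟩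

lemma blk2_fromBlocks_zero₂₁_mulVec {t r : ℕ} (A : Matrix (Fin t) (Fin t) ℂ)
    (B : Matrix (Fin t) (Fin r) ℂ) (D : Matrix (Fin r) (Fin r) ℂ) (x : Fin t ⊕ Fin r → ℂ) :
    blk2 (fromBlocks A B 0 D *ᵥ x) = D *ᵥ blk2 x := by
  ext i
  simp [blk2, mulVec, dotProduct]

lemma S22_fromBlocks_zero₂₁_mul_conjTranspose {t r : ℕ} (A : Matrix (Fin t) (Fin t) ℂ)
    (B : Matrix (Fin t) (Fin r) ℂ) (D : Matrix (Fin r) (Fin r) ℂ) :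
    S22 (fromBlocks A B 0 D * (fromBlocks A B 0 D)ᴴ) = D * Dᴴ := by
  change toBlocks₂₂ (fromBlocks A B 0 D * (fromBlocks A B 0 D)ᴴ) = _
  simp [fromBlocks_conjTranspose, fromBlocks_multiply]

theorem stmt5_general (t r : ℕ)
    (z zb : Fin t ⊕ Fin r → ℂ)
    (S Sb : Matrix (Fin t ⊕ Fin r) (Fin t ⊕ Fin r) ℂ)
    (hS : S.PosDef) (hSb : Sb.PosDef)
    (heq : star (blk2 z) ⬝ᵥ ((S22 S)⁻¹ *ᵥ blk2 z) =
      star (blk2 zb) ⬝ᵥ ((S22 Sb)⁻¹ *ᵥ blk2 zb)) :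
    ∃ G : Matrix (Fin t ⊕ Fin r) (Fin t ⊕ Fin r) ℂ, ∃ f : Fin t ⊕ Fin r → ℂ,
      memG t r G ∧ memF t r f ∧ z = G *ᵥ zb + f ∧ S = G * Sb * Gᴴ := by
  obtain ⟨A, B, D, hA, hD, rfl⟩ := hS.exists_fromBlocks_zero₂₁_mul_conjTranspose
  obtain ⟨Ab, Bb, Db, hAb, hDb, rfl⟩ := hSb.exists_fromBlocks_zero₂₁_mul_conjTranspose
  rw [S22_fromBlocks_zero₂₁_mul_conjTranspose, S22_fromBlocks_zero₂₁_mul_conjTranspose,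
    dotProduct_mulVec_inv_mul_conjTranspose, dotProduct_mulVec_inv_mul_conjTranspose] at heq
  obtain ⟨U, hU, hUz⟩ := exists_mem_unitaryGroup_mulVec_eq heq
  obtain ⟨A', X, hA', hSG⟩ := exists_fromBlocks_zero₂₁_conjugate (B := B) (D := D) (Bb := Bb)
    hA hAb hDb hU
  set G := fromBlocks A' X 0 (D * U * Db⁻¹)
  have hGz : blk2 (G *ᵥ zb) = blk2 z := by
    rw [blk2_fromBlocks_zero₂₁_mulVec, ← mulVec_mulVec, ← mulVec_mulVec, hUz, mulVec_mulVec,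
      mul_nonsing_inv _ ((isUnit_iff_isUnit_det D).mp hD), one_mulVec]
  have hGu : memG t r G := memG_fromBlocks hA'
    ((hD.mul (Unitary.isUnit_coe (U := ⟨U, hU⟩))).mul (isUnit_nonsing_inv_iff.mpr hDb))
  exact ⟨G, z - G *ᵥ zb, hGu, fun i ↦ sub_eq_zero.mpr (congrFun hGz i).symm, by abel, hSG⟩

/-- Proposition 1 (maximality, case `m = N`): if `z₂† S₂₂⁻¹ z₂ = z̄₂† S̄₂₂⁻¹ z̄₂` for
Hermitian positive definite `S`, `S̄`, then there is `(G,f) ∈ 𝓛` with `z = G z̄ + f` and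
`S = G S̄ Gᴴ`. -/
theorem stmt5 (t r : ℕ) (ht : 1 ≤ t) (hr : 1 ≤ r)
    (z zb : Fin t ⊕ Fin r → ℂ)
    (S Sb : Matrix (Fin t ⊕ Fin r) (Fin t ⊕ Fin r) ℂ)
    (hS : S.PosDef) (hSb : Sb.PosDef)
    (heq : star (blk2 z) ⬝ᵥ ((S22 S)⁻¹ *ᵥ blk2 z) =
      star (blk2 zb) ⬝ᵥ ((S22 Sb)⁻¹ *ᵥ blk2 zb)) :
    ∃ G : Matrix (Fin t ⊕ Fin r) (Fin t ⊕ Fin r) ℂ, ∃ f : Fin t ⊕ Fin r → ℂ,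
      memG t r G ∧ memF t r f ∧ z = G *ᵥ zb + f ∧ S = G * Sb * Gᴴ :=
  stmt5_general t r z zb S Sb hS hSb heq
end

section
/- (Energy detector identity, case m = N.) Let N ≥ 2, t ≥ 1, r ≥ 1 with t + r = N, let S ∈ ℂ^{N×N} be Hermitian positive definite, and let E_t ∈ ℂ^{N×t} consist of the first t standard basis vectors of ℂ^N. Then for every z ∈ ℂ^N, z† S^{−1/2}(I_N − P_{S^{−1/2}E_t})S^{−1/2} z = z₂† S₂₂⁻¹ z₂, where z₂ ∈ ℂ^r is the vector of the last r entries of z and S₂₂ the trailing r×r principal submatrix of S; hence when m = N the GLRT and the 2S-GLRT statistics both coincide with the energy detector statistic z₂† S₂₂⁻¹ z₂. -/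
open Matrix ComplexOrder

/-- `E_t`: the matrix whose columns are the first `t` standard basis vectors of ℂ^N,
`N = t + r`. -/
def Et (t r : ℕ) : Matrix (Fin t ⊕ Fin r) (Fin t) ℂ :=
  Matrix.of fun i j => if i = Sum.inl j then 1 else 0

/-- The orthogonal projection `P_A = A (A† A)⁻¹ A†` onto the column space of `A`. -/
noncomputable def proj {n : Type*} {k : Type*} [Fintype n] [Fintype k] [DecidableEq n]
    [DecidableEq k] (A : Matrix n k ℂ) : Matrix n n ℂ :=
  A * (Aᴴ * A)⁻¹ * Aᴴ

/-!
With `T = S⁻¹ = R²`, the matrix `R (I - P_{R E}) R` equals `T - T E (Eᴴ T E)⁻¹ Eᴴ T`. Since `E`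
picks out the first block of coordinates, this is the block matrix whose only nonzero block is
the Schur complement `T₂₂ - T₂₁ T₁₁⁻¹ T₁₂`, and the block inversion formula identifies that Schur
complement with `(T⁻¹)₂₂⁻¹ = S₂₂⁻¹`.
-/

namespace Matrix

variable {m n α : Type*} [Fintype m]

theorem fromBlocks_sub_fromRows_mul_inv_mul_fromCols [DecidableEq m] [CommRing α]
    {A : Matrix m m α} {B : Matrix m n α} {C : Matrix n m α} {D : Matrix n n α}
    (hA : IsUnit A.det) :
    fromBlocks A B C D - fromRows A C * A⁻¹ * fromCols A B =
      fromBlocks 0 0 0 (D - C * A⁻¹ * B) := by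
  rw [fromRows_mul, fromRows_mul_fromCols, mul_nonsing_inv _ hA,
    nonsing_inv_mul_cancel_right _ _ hA, Matrix.one_mul, Matrix.one_mul]
  ext (i | i) (j | j) <;> simp

theorem inv_toBlocks₂₂_inv [DecidableEq m] [Fintype n] [DecidableEq n] [CommRing α]
    (T : Matrix (m ⊕ n) (m ⊕ n) α) (hT : IsUnit T.det) (hT₁₁ : IsUnit T.toBlocks₁₁.det) :
    (T⁻¹.toBlocks₂₂)⁻¹ = T.toBlocks₂₂ - T.toBlocks₂₁ * T.toBlocks₁₁⁻¹ * T.toBlocks₁₂ := by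
  rw [← fromBlocks_toBlocks T] at hT
  let := invertibleOfIsUnitDet _ hT₁₁
  let := invertibleOfIsUnitDet _ hT
  let := invertibleOfFromBlocks₁₁Invertible T.toBlocks₁₁ T.toBlocks₁₂ T.toBlocks₂₁ T.toBlocks₂₂
  conv_lhs => rw [← fromBlocks_toBlocks T]
  rw [← invOf_eq_nonsing_inv (fromBlocks _ _ _ _), invOf_fromBlocks₁₁_eq, toBlocks_fromBlocks₂₂,
    ← invOf_eq_nonsing_inv, invOf_invOf, invOf_eq_nonsing_inv]

theorem dotProduct_fromBlocks_zero_mulVec [Fintype n] [CommSemiring α] [StarRing α]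
    (D : Matrix n n α) (v : m ⊕ n → α) :
    star v ⬝ᵥ (fromBlocks (0 : Matrix m m α) 0 0 D *ᵥ v) =
      star (fun i => v (Sum.inr i)) ⬝ᵥ (D *ᵥ fun i => v (Sum.inr i)) := by
  simp only [fromBlocks_mulVec, zero_mulVec, add_zero, zero_add, dotProduct_block,
    Sum.elim_comp_inl, dotProduct_zero, Sum.elim_comp_inr]
  rfl

end Matrix

theorem mul_one_sub_proj_mul {n k : Type*} [Fintype n] [Fintype k] [DecidableEq n]
    [DecidableEq k] {R : Matrix n n ℂ} (hR : R.IsHermitian) (A : Matrix n k ℂ) :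
    R * (1 - proj (R * A)) * R =
      R * R - R * R * A * (Aᴴ * (R * R) * A)⁻¹ * Aᴴ * (R * R) := by
  simp only [proj, conjTranspose_mul, hR.eq, Matrix.mul_sub, Matrix.sub_mul, Matrix.mul_one,
    Matrix.mul_assoc]

theorem Et_eq_fromRows (t r : ℕ) : Et t r = fromRows 1 0 := by
  ext (i | i) j <;> simp [Et, one_apply]

theorem conjTranspose_Et (t r : ℕ) : (Et t r)ᴴ = fromCols 1 0 := by
  rw [Et_eq_fromRows, conjTranspose_fromRows_eq_fromCols_conjTranspose, conjTranspose_one,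
    conjTranspose_zero]

theorem sub_mul_Et_mul {t r : ℕ} (T : Matrix (Fin t ⊕ Fin r) (Fin t ⊕ Fin r) ℂ)
    (hT₁₁ : IsUnit T.toBlocks₁₁.det) :
    T - T * Et t r * ((Et t r)ᴴ * T * Et t r)⁻¹ * (Et t r)ᴴ * T =
      fromBlocks 0 0 0 (T.toBlocks₂₂ - T.toBlocks₂₁ * T.toBlocks₁₁⁻¹ * T.toBlocks₁₂) := by
  conv_lhs => rw [← fromBlocks_toBlocks T, conjTranspose_Et, Et_eq_fromRows]
  simp only [Matrix.mul_assoc _ (fromCols 1 0), fromBlocks_mul_fromRows, fromCols_mul_fromBlocks,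
    fromCols_mul_fromRows, Matrix.mul_one, Matrix.one_mul, Matrix.mul_zero, Matrix.zero_mul,
    add_zero]
  exact fromBlocks_sub_fromRows_mul_inv_mul_fromCols hT₁₁

theorem stmt10_general (t r : ℕ)
    (S : Matrix (Fin t ⊕ Fin r) (Fin t ⊕ Fin r) ℂ) (hS : S.PosDef)
    (R : Matrix (Fin t ⊕ Fin r) (Fin t ⊕ Fin r) ℂ) (hR : R.PosDef) (hRS : R * R = S⁻¹)
    (z : Fin t ⊕ Fin r → ℂ) :
    star z ⬝ᵥ ((R * (1 - proj (R * Et t r)) * R) *ᵥ z) =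
      star (fun i => z (Sum.inr i)) ⬝ᵥ
        ((S.submatrix Sum.inr Sum.inr)⁻¹ *ᵥ fun i => z (Sum.inr i)) := by
  have hS_det : IsUnit S.det := hS.det_pos.ne'.isUnit
  have hT₁₁ : IsUnit (S⁻¹).toBlocks₁₁.det :=
    (hS.inv.submatrix Sum.inl_injective).det_pos.ne'.isUnit
  rw [mul_one_sub_proj_mul hR.isHermitian, hRS, sub_mul_Et_mul _ hT₁₁,
    dotProduct_fromBlocks_zero_mulVec,
    ← inv_toBlocks₂₂_inv _ (isUnit_nonsing_inv_det _ hS_det) hT₁₁, nonsing_inv_nonsing_inv _ hS_det]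
  rfl

/-- Energy detector identity, case `m = N` (`t + r = N`): with `R = S^{-1/2}` the
Hermitian positive definite inverse square root of `S`,
`z† S^{-1/2}(I − P_{S^{-1/2}E_t})S^{-1/2} z = z₂† S₂₂⁻¹ z₂`, where `z₂` is the vector of
the last `r` entries of `z` and `S₂₂` the trailing `r × r` principal submatrix of `S`;
this common value of the GLRT and 2S-GLRT statistics is the energy detector statistic. -/
theorem stmt10 (t r : ℕ) (ht : 1 ≤ t) (hr : 1 ≤ r)
    (S : Matrix (Fin t ⊕ Fin r) (Fin t ⊕ Fin r) ℂ) (hS : S.PosDef)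
    (R : Matrix (Fin t ⊕ Fin r) (Fin t ⊕ Fin r) ℂ) (hR : R.PosDef) (hRS : R * R = S⁻¹)
    (z : Fin t ⊕ Fin r → ℂ) :
    star z ⬝ᵥ ((R * (1 - proj (R * Et t r)) * R) *ᵥ z) =
      star (fun i => z (Sum.inr i)) ⬝ᵥ
        ((S.submatrix Sum.inr Sum.inr)⁻¹ *ᵥ fun i => z (Sum.inr i)) :=
  stmt10_general t r S hS R hR hRS z
end
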